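/- arXiv:0806.1148 — 6 statements merged into one kernel-verified Lean document; each statement's English description precedes it below -/
import Mathlib

section
/- Let ℓ ≤ k, let F = F⁺ ∧ F⁻ be an (ℓ,k)-CNF formula, and let G be the k-CNFification of F. Then the number of conflicts of G satisfies e(G) ≤ 4^{k-ℓ}·|F⁺| + 2^{k-ℓ}·|F⁺|·|F⁻|. -/
open scoped Classical

abbrev Var := ℕ
abbrev Lit := Var × Bool
abbrev Clause := Finset Lit
abbrev CNF := Finset Clause

/-- A clause is valid if no variable occurs both positively and negatively. -/
def ClauseValid (C : Clause) : Prop :=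
  ∀ x : Var, ¬(((x, true) ∈ C) ∧ ((x, false) ∈ C))

/-- Assignment `α` satisfies clause `C`. -/
def SatC (α : Var → Bool) (C : Clause) : Prop := ∃ l ∈ C, α l.1 = l.2

/-- A CNF formula is satisfiable. -/
def Satisfiable (F : CNF) : Prop := ∃ α : Var → Bool, ∀ C ∈ F, SatC α C

/-- Two clauses conflict: some variable positive in one, negative in the other. -/
def Conflict (C D : Clause) : Prop :=
  ∃ x : Var, (((x, true) ∈ C) ∧ ((x, false) ∈ D)) ∨ (((x, false) ∈ C) ∧ ((x, true) ∈ D))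

/-- Number of clauses of `F` containing the literal `u`. -/
noncomputable def occ (F : CNF) (u : Lit) : ℕ := (F.filter (fun C => u ∈ C)).card

/-- Number of unordered conflicting pairs of distinct clauses. -/
noncomputable def numConflicts (F : CNF) : ℕ :=
  ((F ×ˢ F).filter (fun p => p.1 ≠ p.2 ∧ Conflict p.1 p.2)).card / 2

/-- `F` is a `k`-CNF formula. -/
def IsKCNF (k : ℕ) (F : CNF) : Prop := ∀ C ∈ F, C.card = k ∧ ClauseValid C

/-- All clauses of `Fp` have exactly `l` literals, all positive. -/
def PosClauses (l : ℕ) (Fp : CNF) : Prop :=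
  ∀ C ∈ Fp, C.card = l ∧ ∀ u ∈ C, u.2 = true

/-- All clauses of `Fn` have exactly `k` literals, all negative. -/
def NegClauses (k : ℕ) (Fn : CNF) : Prop :=
  ∀ C ∈ Fn, C.card = k ∧ ∀ u ∈ C, u.2 = false

/-- The variables occurring in `F`. -/
noncomputable def varsOf (F : CNF) : Finset Var := F.biUnion (fun C => C.image Prod.fst)

/-- All `2^|V|` clauses obtained by disjoining `C` with a full sign pattern on `V`. -/
noncomputable def expansions (C : Clause) (V : Finset Var) : Finset Clause :=
  (Finset.univ : Finset ({x // x ∈ V} → Bool)).image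
    (fun s => C ∪ V.attach.image (fun x => (x.1, s x)))

/-- The complete `k`-CNF formula over the variables `0, …, k-1`. -/
noncomputable def completeCNF (k : ℕ) : CNF := expansions ∅ (Finset.range k)

/-- `G` is a `k`-CNFification of `F`: each clause `C` of `F` is replaced by the
`2^(k - |C|)` expansions of `C` over `k - |C|` fresh variables, fresh per clause. -/
noncomputable def IsKCNFification (k : ℕ) (F G : CNF) : Prop :=
  ∃ Y : Clause → Finset Var,
    (∀ C ∈ F, Disjoint (Y C) (varsOf F)) ∧
    (∀ C ∈ F, ∀ D ∈ F, C ≠ D → Disjoint (Y C) (Y D)) ∧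
    (∀ C ∈ F, (Y C).card = k - C.card) ∧
    G = F.biUnion (fun C => expansions C (Y C))

/-!
Negative clauses are already `k`-clauses, so the `k`-CNFification only expands the positive
clauses, into blocks of at most `2^{k-ℓ}` clauses each. Two clauses in different blocks never
conflict: a negative literal `¬x` in an expansion of a positive clause `C` must use one of the
fresh variables of `C`, which occur nowhere outside the block of `C`. Hence a conflicting pair lies either
inside one block (at most `4^{k-ℓ}` pairs per block) or between a block and `F⁻`.
-/

noncomputable def conflictPairs (F : CNF) : Finset (Clause × Clause) :=
  (F ×ˢ F).filter (fun p => p.1 ≠ p.2 ∧ Conflict p.1 p.2)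

lemma numConflicts_eq_card_conflictPairs_div_two (F : CNF) :
    numConflicts F = (conflictPairs F).card / 2 := rfl

lemma Conflict.exists_pos_lit {C D : Clause} (h : Conflict C D) :
    (∃ u ∈ C, u.2 = true) ∨ ∃ u ∈ D, u.2 = true := by
  obtain ⟨x, ⟨hC, -⟩ | ⟨-, hD⟩⟩ := h
  · exact Or.inl ⟨_, hC, rfl⟩
  · exact Or.inr ⟨_, hD, rfl⟩

lemma conflictPairs_union_subset (A B : CNF) (hB : ∀ C ∈ B, ∀ u ∈ C, u.2 = false) :
    conflictPairs (A ∪ B) ⊆ conflictPairs A ∪ (A ×ˢ B ∪ B ×ˢ A) := by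
  intro p hp
  simp only [conflictPairs, Finset.mem_filter, Finset.mem_product, Finset.mem_union] at hp ⊢
  obtain ⟨⟨hp1 | hp1, hp2 | hp2⟩, hne, hconf⟩ := hp
  · exact Or.inl ⟨⟨hp1, hp2⟩, hne, hconf⟩
  · exact Or.inr (Or.inl ⟨hp1, hp2⟩)
  · exact Or.inr (Or.inr ⟨hp1, hp2⟩)
  · exfalso
    rcases hconf.exists_pos_lit with ⟨u, hu, hpos⟩ | ⟨u, hu, hpos⟩
    · simp [hB _ hp1 u hu] at hpos
    · simp [hB _ hp2 u hu] at hpos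

lemma card_conflictPairs_union_le (A B : CNF) (hB : ∀ C ∈ B, ∀ u ∈ C, u.2 = false) :
    (conflictPairs (A ∪ B)).card ≤ (conflictPairs A).card + 2 * A.card * B.card := by
  calc (conflictPairs (A ∪ B)).card
      ≤ (conflictPairs A ∪ (A ×ˢ B ∪ B ×ˢ A)).card :=
        Finset.card_le_card (conflictPairs_union_subset A B hB)
    _ ≤ (conflictPairs A).card + ((A ×ˢ B).card + (B ×ˢ A).card) :=
        (Finset.card_union_le _ _).trans (Nat.add_le_add_left (Finset.card_union_le _ _) _)
    _ = (conflictPairs A).card + 2 * A.card * B.card := by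
        rw [Finset.card_product, Finset.card_product]; ring

lemma conflictPairs_biUnion_subset {ι : Type*} (s : Finset ι) (f : ι → CNF)
    (hblocks : ∀ i ∈ s, ∀ j ∈ s, i ≠ j → ∀ E ∈ f i, ∀ E' ∈ f j, ¬Conflict E E') :
    conflictPairs (s.biUnion f) ⊆ s.biUnion (fun i => f i ×ˢ f i) := by
  intro p hp
  simp only [conflictPairs, Finset.mem_filter, Finset.mem_product, Finset.mem_biUnion] at hp ⊢
  obtain ⟨⟨⟨i, hi, hp1⟩, ⟨j, hj, hp2⟩⟩, -, hconf⟩ := hp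
  obtain rfl : i = j := by_contra fun hij => hblocks i hi j hj hij _ hp1 _ hp2 hconf
  exact ⟨i, hi, hp1, hp2⟩

lemma card_conflictPairs_biUnion_le {ι : Type*} (s : Finset ι) (f : ι → CNF) (n : ℕ)
    (hblocks : ∀ i ∈ s, ∀ j ∈ s, i ≠ j → ∀ E ∈ f i, ∀ E' ∈ f j, ¬Conflict E E')
    (hcard : ∀ i ∈ s, (f i).card ≤ n) :
    (conflictPairs (s.biUnion f)).card ≤ s.card * n ^ 2 :=
  (Finset.card_le_card (conflictPairs_biUnion_subset s f hblocks)).trans <|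
    Finset.card_biUnion_le_card_mul _ _ _ fun i hi => by
      rw [Finset.card_product, sq]
      exact Nat.mul_le_mul (hcard i hi) (hcard i hi)

lemma card_expansions_le (C : Clause) (V : Finset Var) :
    (expansions C V).card ≤ 2 ^ V.card :=
  Finset.card_image_le.trans (by simp)

lemma expansions_empty (C : Clause) : expansions C ∅ = {C} := by
  ext E
  simp [expansions, eq_comm]

lemma mem_or_mem_of_mem_expansions {C E : Clause} {V : Finset Var} (hE : E ∈ expansions C V)
    {x : Var} {b : Bool} (hx : (x, b) ∈ E) : (x, b) ∈ C ∨ x ∈ V := by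
  obtain ⟨s, -, rfl⟩ := Finset.mem_image.mp hE
  rcases Finset.mem_union.mp hx with hC | hV
  · exact Or.inl hC
  · obtain ⟨y, -, hy⟩ := Finset.mem_image.mp hV
    exact Or.inr ((Prod.mk.inj hy).1 ▸ y.2)

lemma mem_of_neg_mem_expansions {C E : Clause} {V : Finset Var}
    (hC : ∀ u ∈ C, u.2 = true) (hE : E ∈ expansions C V) {x : Var} (hx : (x, false) ∈ E) :
    x ∈ V :=
  (mem_or_mem_of_mem_expansions hE hx).resolve_left fun h => by simpa using hC _ h

lemma mem_varsOf {F : CNF} {C : Clause} (hC : C ∈ F) {x : Var} {b : Bool}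
    (hx : (x, b) ∈ C) : x ∈ varsOf F :=
  Finset.mem_biUnion.mpr ⟨C, hC, Finset.mem_image.mpr ⟨(x, b), hx, rfl⟩⟩

section Fresh

variable {F : CNF} {Y : Clause → Finset Var}

lemma not_mem_fresh_of_mem_expansions (hvars : ∀ C ∈ F, Disjoint (Y C) (varsOf F))
    (hfresh : ∀ C ∈ F, ∀ D ∈ F, C ≠ D → Disjoint (Y C) (Y D))
    {C D E : Clause} (hC : C ∈ F) (hD : D ∈ F) (hCD : C ≠ D) (hE : E ∈ expansions C (Y C))
    {x : Var} {b : Bool} (hx : (x, b) ∈ E) : x ∉ Y D := by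
  rcases mem_or_mem_of_mem_expansions hE hx with hxC | hxY
  · exact Finset.disjoint_right.mp (hvars D hD) (mem_varsOf hC hxC)
  · exact Finset.disjoint_left.mp (hfresh C hC D hD hCD) hxY

lemma not_conflict_expansions_of_pos (hvars : ∀ C ∈ F, Disjoint (Y C) (varsOf F))
    (hfresh : ∀ C ∈ F, ∀ D ∈ F, C ≠ D → Disjoint (Y C) (Y D))
    {C D : Clause} (hC : C ∈ F) (hD : D ∈ F) (hCD : C ≠ D)
    (hCpos : ∀ u ∈ C, u.2 = true) (hDpos : ∀ u ∈ D, u.2 = true)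
    {E E' : Clause} (hE : E ∈ expansions C (Y C)) (hE' : E' ∈ expansions D (Y D)) :
    ¬Conflict E E' := by
  rintro ⟨x, ⟨hxE, hxE'⟩ | ⟨hxE, hxE'⟩⟩
  · exact not_mem_fresh_of_mem_expansions hvars hfresh hC hD hCD hE hxE
      (mem_of_neg_mem_expansions hDpos hE' hxE')
  · exact not_mem_fresh_of_mem_expansions hvars hfresh hD hC hCD.symm hE' hxE'
      (mem_of_neg_mem_expansions hCpos hE hxE)

end Fresh

theorem stmt5_general (l k : ℕ) (Fp Fn G : CNF)
    (hp : PosClauses l Fp) (hn : NegClauses k Fn)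
    (hG : IsKCNFification k (Fp ∪ Fn) G) :
    numConflicts G ≤ 4 ^ (k - l) * Fp.card + 2 ^ (k - l) * Fp.card * Fn.card := by
  obtain ⟨Y, hvars, hfresh, hcard, rfl⟩ := hG
  have hFn : Fn.biUnion (fun C => expansions C (Y C)) = Fn := by
    refine (Finset.biUnion_congr rfl fun C hC => ?_).trans (Finset.biUnion_singleton_eq_self)
    have hYC : Y C = ∅ := by simpa [(hn C hC).1] using hcard C (Finset.mem_union_right _ hC)
    rw [hYC, expansions_empty]
  set U := Fp.biUnion (fun C => expansions C (Y C))
  have hblock : ∀ C ∈ Fp, (expansions C (Y C)).card ≤ 2 ^ (k - l) := fun C hC => by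
    simpa [hcard C (Finset.mem_union_left _ hC), (hp C hC).1] using card_expansions_le C (Y C)
  have hU : U.card ≤ Fp.card * 2 ^ (k - l) := Finset.card_biUnion_le_card_mul _ _ _ hblock
  have hpairsU : (conflictPairs U).card ≤ Fp.card * 4 ^ (k - l) := by
    rw [show 4 ^ (k - l) = (2 ^ (k - l)) ^ 2 by rw [← pow_mul, mul_comm, pow_mul]; norm_num]
    refine card_conflictPairs_biUnion_le Fp _ _ (fun C hC D hD hCD E hE E' hE' => ?_) hblock
    exact not_conflict_expansions_of_pos hvars hfresh (Finset.mem_union_left _ hC)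
      (Finset.mem_union_left _ hD) hCD (hp C hC).2 (hp D hD).2 hE hE'
  have hpairs := card_conflictPairs_union_le U Fn fun C hC => (hn C hC).2
  rw [numConflicts_eq_card_conflictPairs_div_two, Finset.union_biUnion, hFn]
  refine Nat.div_le_of_le_mul ?_
  nlinarith [Nat.mul_le_mul_right Fn.card hU]

/-- The `k`-CNFification `G` of an `(ℓ,k)`-CNF formula satisfies
`e(G) ≤ 4^{k-ℓ}|F⁺| + 2^{k-ℓ}|F⁺||F⁻|`. -/
theorem stmt5 (l k : ℕ) (hlk : l ≤ k) (Fp Fn G : CNF)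
    (hp : PosClauses l Fp) (hn : NegClauses k Fn)
    (hG : IsKCNFification k (Fp ∪ Fn) G) :
    numConflicts G ≤ 4 ^ (k - l) * Fp.card + 2 ^ (k - l) * Fp.card * Fn.card :=
  stmt5_general l k Fp Fn G hp hn hG
end

section
/- Let ℓ ≤ k, let F = F⁺ ∧ F⁻ be an (ℓ,k)-CNF formula, and let G be its k-CNFification. Then for every variable x, occ_G(x)·occ_G(x̄) ≤ max{4^{k-ℓ}, 2^{k-ℓ}·|F⁺|·|F⁻|}. -/
open scoped Classical

/-
Clauses of `F` spawn their expansions independently, so the occurrences of a literal in `G` are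
counted clause by clause. A fresh variable of a clause `C₀` occurs, with either sign, only in the
at most `2^(k-ℓ)` expansions of `C₀`; this gives the term `4^(k-ℓ)`. An original variable `x`
occurs positively only in expansions of clauses of `F⁺`, at most `2^(k-ℓ)` per clause, and
negatively only in clauses of `F⁻`, which are already `k`-clauses and are left untouched.
-/

lemma occ_biUnion_le (F : CNF) (g : Clause → CNF) (u : Lit) :
    occ (F.biUnion g) u ≤ ∑ C ∈ F, occ (g C) u := by
  unfold occ
  rw [Finset.filter_biUnion]
  exact Finset.card_biUnion_le

lemma occ_le_card_of_forall {F S : CNF} {u : Lit} (h : ∀ C ∈ F, u ∈ C → C ∈ S) :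
    occ F u ≤ S.card :=
  Finset.card_le_card fun C hC => h C (Finset.mem_filter.mp hC).1 (Finset.mem_filter.mp hC).2

lemma occ_expansions_le (C : Clause) (V : Finset Var) (u : Lit) :
    occ (expansions C V) u ≤ 2 ^ V.card :=
  calc occ (expansions C V) u ≤ (expansions C V).card := Finset.card_filter_le _ _
    _ ≤ (Finset.univ : Finset ({x // x ∈ V} → Bool)).card := Finset.card_image_le
    _ = 2 ^ V.card := by simp

lemma occ_expansions_eq_zero {C : Clause} {V : Finset Var} {u : Lit}
    (huC : u ∉ C) (huV : u.1 ∉ V) : occ (expansions C V) u = 0 := by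
  refine Finset.card_eq_zero.mpr (Finset.filter_eq_empty_iff.mpr ?_)
  rintro _ hD hu
  obtain ⟨s, -, rfl⟩ := Finset.mem_image.mp hD
  rcases Finset.mem_union.mp hu with hu | hu
  · exact huC hu
  · obtain ⟨y, -, rfl⟩ := Finset.mem_image.mp hu
    exact huV y.2

lemma fst_mem_varsOf {F : CNF} {C : Clause} {u : Lit} (hC : C ∈ F) (hu : u ∈ C) :
    u.1 ∈ varsOf F :=
  Finset.mem_biUnion.mpr ⟨C, hC, Finset.mem_image.mpr ⟨u, hu, rfl⟩⟩

section Expansion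

variable {F : CNF} {Y : Clause → Finset Var}

lemma occ_biUnion_expansions_le_of_mem_fresh {C₀ : Clause} {x : Var} (hC₀ : C₀ ∈ F)
    (hfresh : Disjoint (Y C₀) (varsOf F))
    (hdisj : ∀ C ∈ F, C ≠ C₀ → Disjoint (Y C) (Y C₀)) (hx : x ∈ Y C₀) (b : Bool) :
    occ (F.biUnion fun C => expansions C (Y C)) (x, b) ≤ 2 ^ (Y C₀).card := by
  have hother : ∀ C ∈ F, C ≠ C₀ → occ (expansions C (Y C)) (x, b) = 0 := fun C hC hne =>
    occ_expansions_eq_zero (fun hxC => Finset.disjoint_right.mp hfresh (fst_mem_varsOf hC hxC) hx)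
      (fun hxY => Finset.disjoint_left.mp (hdisj C hC hne) hxY hx)
  calc occ (F.biUnion fun C => expansions C (Y C)) (x, b)
      ≤ ∑ C ∈ F, occ (expansions C (Y C)) (x, b) := occ_biUnion_le _ _ _
    _ = occ (expansions C₀ (Y C₀)) (x, b) :=
        Finset.sum_eq_single C₀ hother (fun h => absurd hC₀ h)
    _ ≤ 2 ^ (Y C₀).card := occ_expansions_le _ _ _

lemma occ_biUnion_expansions_le_of_not_fresh {u : Lit} {m : ℕ} (hu : ∀ C ∈ F, u.1 ∉ Y C)
    (hY : ∀ C ∈ F, u ∈ C → (Y C).card ≤ m) :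
    occ (F.biUnion fun C => expansions C (Y C)) u ≤ 2 ^ m * occ F u := by
  have hsupp : ∀ C ∈ F, occ (expansions C (Y C)) u ≠ 0 → u ∈ C := fun C hC h => by
    by_contra huC
    exact h (occ_expansions_eq_zero huC (hu C hC))
  calc occ (F.biUnion fun C => expansions C (Y C)) u
      ≤ ∑ C ∈ F, occ (expansions C (Y C)) u := occ_biUnion_le _ _ _
    _ = ∑ C ∈ F with u ∈ C, occ (expansions C (Y C)) u := (Finset.sum_filter_of_ne hsupp).symm
    _ ≤ occ F u • 2 ^ m := Finset.sum_le_card_nsmul _ _ _ fun C hC =>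
        have ⟨hCF, huC⟩ := Finset.mem_filter.mp hC
        (occ_expansions_le _ _ _).trans (Nat.pow_le_pow_right two_pos (hY C hCF huC))
    _ = 2 ^ m * occ F u := by rw [smul_eq_mul, mul_comm]

end Expansion

lemma NegClauses.mem_left_of_pos_mem {k : ℕ} {Fp Fn : CNF} (hn : NegClauses k Fn)
    {C : Clause} {x : Var} (hC : C ∈ Fp ∪ Fn) (hx : (x, true) ∈ C) : C ∈ Fp :=
  (Finset.mem_union.mp hC).resolve_right fun h => by simpa using (hn C h).2 _ hx

lemma PosClauses.mem_right_of_neg_mem {l : ℕ} {Fp Fn : CNF} (hp : PosClauses l Fp)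
    {C : Clause} {x : Var} (hC : C ∈ Fp ∪ Fn) (hx : (x, false) ∈ C) : C ∈ Fn :=
  (Finset.mem_union.mp hC).resolve_left fun h => by simpa using (hp C h).2 _ hx

theorem stmt6_general (l k : ℕ) (Fp Fn G : CNF)
    (hp : PosClauses l Fp) (hn : NegClauses k Fn)
    (hG : IsKCNFification k (Fp ∪ Fn) G) :
    ∀ x : Var, occ G (x, true) * occ G (x, false) ≤
      max (4 ^ (k - l)) (2 ^ (k - l) * Fp.card * Fn.card) := by
  obtain ⟨Y, hfresh, hdisj, hcard, rfl⟩ := hG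
  intro x
  have hYn : ∀ C ∈ Fn, (Y C).card = 0 := fun C hC => by
    rw [hcard C (Finset.mem_union_right _ hC), (hn C hC).1, Nat.sub_self]
  have hY : ∀ C ∈ Fp ∪ Fn, (Y C).card ≤ k - l := fun C hC => by
    rcases Finset.mem_union.mp hC with h | h
    · rw [hcard C hC, (hp C h).1]
    · rw [hYn C h]; exact Nat.zero_le _
  by_cases hx : ∃ C₀ ∈ Fp ∪ Fn, x ∈ Y C₀
  · obtain ⟨C₀, hC₀, hxC₀⟩ := hx
    have hocc : ∀ b,
        occ ((Fp ∪ Fn).biUnion fun C => expansions C (Y C)) (x, b) ≤ 2 ^ (k - l) :=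
      fun b => (occ_biUnion_expansions_le_of_mem_fresh hC₀ (hfresh C₀ hC₀)
        (fun C hC hne => hdisj C hC C₀ hC₀ hne) hxC₀ b).trans
        (Nat.pow_le_pow_right two_pos (hY C₀ hC₀))
    calc _ ≤ 2 ^ (k - l) * 2 ^ (k - l) := Nat.mul_le_mul (hocc true) (hocc false)
      _ = 4 ^ (k - l) := by rw [← mul_pow]; rfl
      _ ≤ _ := le_max_left _ _
  · push Not at hx
    have hpos := occ_biUnion_expansions_le_of_not_fresh (u := (x, true)) hx
      fun C hC _ => hY C hC
    have hneg := occ_biUnion_expansions_le_of_not_fresh (u := (x, false)) (m := 0) hx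
      fun C hC hxC => (hYn C (hp.mem_right_of_neg_mem hC hxC)).le
    have hFp : occ (Fp ∪ Fn) (x, true) ≤ Fp.card :=
      occ_le_card_of_forall fun C hC hxC => hn.mem_left_of_pos_mem hC hxC
    have hFn : occ (Fp ∪ Fn) (x, false) ≤ Fn.card :=
      occ_le_card_of_forall fun C hC hxC => hp.mem_right_of_neg_mem hC hxC
    calc _ ≤ 2 ^ (k - l) * Fp.card * Fn.card :=
          Nat.mul_le_mul (hpos.trans (Nat.mul_le_mul_left _ hFp))
            (hneg.trans (by simpa using hFn))
      _ ≤ _ := le_max_right _ _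

/-- The `k`-CNFification `G` of an `(ℓ,k)`-CNF formula satisfies, for every variable `x`,
`occ_G(x) · occ_G(x̄) ≤ max{4^{k-ℓ}, 2^{k-ℓ}|F⁺||F⁻|}`. -/
theorem stmt6 (l k : ℕ) (hlk : l ≤ k) (Fp Fn G : CNF)
    (hp : PosClauses l Fp) (hn : NegClauses k Fn)
    (hG : IsKCNFification k (Fp ∪ Fn) G) :
    ∀ x : Var, occ G (x, true) * occ G (x, false) ≤
      max (4 ^ (k - l)) (2 ^ (k - l) * Fp.card * Fn.card) :=
  stmt6_general l k Fp Fn G hp hn hG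
end

section
/- Let F be a CNF formula not containing the empty clause, and sample a truth assignment α by independently setting each variable x to true with probability p(x) ∈ [0,1]. If for every clause C ∈ F, the sum over clauses D ∈ F conflicting with C of Pr[α does not satisfy D] is at most 1/4, then F is satisfiable. -/
open scoped Classical

/-!
A clause whose failure probability exceeds `1/4` conflicts with no clause of `F`, since it alone
would exceed the bound for that clause. Making its literals true therefore falsifies nothing
else, so it suffices to satisfy the clauses `D` with `Pr[D fails] ≤ 1/4`.

For these, the lopsided local lemma with weights `2 Pr[D fails]`: by strong induction on `S`,
`Pr[C fails ∧ S holds] ≤ 2 Pr[C fails] Pr[S holds]`. Let `T ⊆ S` be the clauses not conflicting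
with `C`. Conditioning on `C` failing pins the variables of `C` to their falsifying values, which
can only falsify clauses of `T`; since the pinned coordinates are independent of the others,
`Pr[C fails ∧ T holds] ≤ Pr[C fails] Pr[T holds]`. The induction hypothesis and the sum condition
give `Pr[T holds] ≤ Pr[S holds] + Pr[T holds] / 2`. Adding the clauses of `F` one at a time then
keeps `Pr[F holds]` positive.
-/

open Finset

theorem sum_union_le_of_nonneg {α : Type*} [DecidableEq α] {w : α → ℝ} (hw : ∀ a, 0 ≤ w a)
    (s t : Finset α) : ∑ a ∈ s ∪ t, w a ≤ ∑ a ∈ s, w a + ∑ a ∈ t, w a := by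
  rw [← sum_union_inter]
  exact le_add_of_nonneg_right (sum_nonneg fun a _ => hw a)

section LocalLemma

variable {Ω κ : Type*} [Fintype Ω] [DecidableEq Ω]

def avoiding (bad : κ → Finset Ω) (S : Finset κ) : Finset Ω := {ω | ∀ D ∈ S, ω ∉ bad D}

variable {w : Ω → ℝ} {bad : κ → Finset Ω}

theorem avoiding_anti {S T : Finset κ} (h : S ⊆ T) : avoiding bad T ⊆ avoiding bad S := by
  intro ω hω
  simp only [avoiding, mem_filter, mem_univ, true_and] at hω ⊢
  exact fun D hD => hω D (h hD)

theorem sum_avoiding_le (hw : ∀ ω, 0 ≤ w ω) (S T : Finset κ) :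
    ∑ ω ∈ avoiding bad T, w ω ≤
      ∑ ω ∈ avoiding bad S, w ω + ∑ D ∈ S \ T, ∑ ω ∈ bad D ∩ avoiding bad T, w ω := by
  have hsub : avoiding bad T ⊆ avoiding bad S ∪ (S \ T).sup fun D => bad D ∩ avoiding bad T := by
    intro ω hω
    have hT := hω
    simp only [avoiding, mem_filter, mem_univ, true_and] at hT
    by_cases hS : ω ∈ avoiding bad S
    · exact mem_union_left _ hS
    · simp only [avoiding, mem_filter, mem_univ, true_and, not_forall, not_not] at hS
      obtain ⟨D, hDS, hD⟩ := hS
      refine mem_union_right _ (mem_sup.2 ⟨D, mem_sdiff.2 ⟨hDS, fun hDT => hT D hDT hD⟩, ?_⟩)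
      exact mem_inter.2 ⟨hD, hω⟩
  calc ∑ ω ∈ avoiding bad T, w ω
      ≤ ∑ ω ∈ avoiding bad S ∪ (S \ T).sup fun D => bad D ∩ avoiding bad T, w ω :=
        sum_le_sum_of_subset_of_nonneg hsub fun ω _ _ => hw ω
    _ ≤ ∑ ω ∈ avoiding bad S, w ω + ∑ ω ∈ (S \ T).sup fun D => bad D ∩ avoiding bad T, w ω :=
        sum_union_le_of_nonneg hw _ _
    _ ≤ _ := by
        gcongr
        exact apply_sup_le_sum (f := fun s => ∑ ω ∈ s, w ω) sum_empty
          (sum_union_le_of_nonneg hw _ _) _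

variable {R : κ → κ → Prop} {q : κ → ℝ} {F : Finset κ}

theorem sum_bad_inter_avoiding_le (hw : ∀ ω, 0 ≤ w ω) (hq : ∀ C ∈ F, 0 ≤ q C)
    (hsum : ∀ C ∈ F, ∑ D ∈ F with R C D, q D ≤ 1 / 4)
    (hlop : ∀ C ∈ F, ∀ S ⊆ F, (∀ D ∈ S, ¬ R C D) →
      ∑ ω ∈ bad C ∩ avoiding bad S, w ω ≤ q C * ∑ ω ∈ avoiding bad S, w ω)
    (S : Finset κ) (hSF : S ⊆ F) (C : κ) (hC : C ∈ F) :
    ∑ ω ∈ bad C ∩ avoiding bad S, w ω ≤ 2 * q C * ∑ ω ∈ avoiding bad S, w ω := by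
  induction S using Finset.strongInduction generalizing C with
  | H S ih =>
    set T := S.filter fun D => ¬ R C D
    have hTS : T ⊆ S := filter_subset _ _
    have hT : ∑ ω ∈ avoiding bad T, w ω ≤ 2 * ∑ ω ∈ avoiding bad S, w ω := by
      have hbad : ∀ D ∈ S \ T, ∑ ω ∈ bad D ∩ avoiding bad T, w ω ≤
          2 * q D * ∑ ω ∈ avoiding bad T, w ω := by
        intro D hD
        have hDS := (mem_sdiff.1 hD).1
        exact ih T (ssubset_of_subset_of_ne hTS fun h => (mem_sdiff.1 hD).2 (h ▸ hDS))
          (hTS.trans hSF) D (hSF hDS)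
      have hconf : ∑ D ∈ S \ T, q D ≤ 1 / 4 := by
        refine le_trans (sum_le_sum_of_subset_of_nonneg ?_ fun D hD _ => hq D (mem_filter.1 hD).1)
          (hsum C hC)
        intro D hD
        obtain ⟨hDS, hDT⟩ := mem_sdiff.1 hD
        exact mem_filter.2 ⟨hSF hDS, by simpa [T, hDS] using hDT⟩
      have hpos : 0 ≤ ∑ ω ∈ avoiding bad T, w ω := sum_nonneg fun ω _ => hw ω
      have h : ∑ ω ∈ avoiding bad T, w ω ≤
          ∑ ω ∈ avoiding bad S, w ω + 2 * (∑ D ∈ S \ T, q D) * ∑ ω ∈ avoiding bad T, w ω := by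
        calc ∑ ω ∈ avoiding bad T, w ω
            ≤ ∑ ω ∈ avoiding bad S, w ω + ∑ D ∈ S \ T, 2 * q D * ∑ ω ∈ avoiding bad T, w ω :=
              (sum_avoiding_le hw S T).trans (add_le_add le_rfl (sum_le_sum hbad))
          _ = _ := by rw [← sum_mul, ← mul_sum]
      nlinarith [mul_le_mul_of_nonneg_right hconf hpos]
    calc ∑ ω ∈ bad C ∩ avoiding bad S, w ω
        ≤ ∑ ω ∈ bad C ∩ avoiding bad T, w ω :=
          sum_le_sum_of_subset_of_nonneg (inter_subset_inter_left (avoiding_anti hTS))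
            fun ω _ _ => hw ω
      _ ≤ q C * ∑ ω ∈ avoiding bad T, w ω :=
          hlop C hC T (hTS.trans hSF) fun D hD => (mem_filter.1 hD).2
      _ ≤ 2 * q C * ∑ ω ∈ avoiding bad S, w ω := by nlinarith [hq C hC]

theorem sum_avoiding_pos (hw : ∀ ω, 0 ≤ w ω) (hw_pos : 0 < ∑ ω, w ω)
    (hq : ∀ C ∈ F, 0 ≤ q C) (hq_lt : ∀ C ∈ F, q C < 1 / 2)
    (hsum : ∀ C ∈ F, ∑ D ∈ F with R C D, q D ≤ 1 / 4)
    (hlop : ∀ C ∈ F, ∀ S ⊆ F, (∀ D ∈ S, ¬ R C D) →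
      ∑ ω ∈ bad C ∩ avoiding bad S, w ω ≤ q C * ∑ ω ∈ avoiding bad S, w ω)
    (S : Finset κ) (hSF : S ⊆ F) : 0 < ∑ ω ∈ avoiding bad S, w ω := by
  induction S using Finset.induction_on with
  | empty => simpa [avoiding] using hw_pos
  | insert D S hD ih =>
    have hDF : D ∈ F := hSF (mem_insert_self D S)
    have hSF' : S ⊆ F := (subset_insert D S).trans hSF
    have h := sum_avoiding_le (bad := bad) hw (insert D S) S
    rw [insert_sdiff_cancel hD, sum_singleton] at h
    have := sum_bad_inter_avoiding_le hw hq hsum hlop S hSF' D hDF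
    nlinarith [ih hSF', hq_lt D hDF]

end LocalLemma

section PinnedCoordinates

variable {ι : Type*} [Fintype ι] [DecidableEq ι] {w : ι → Bool → ℝ}

theorem sum_prod_eq_one (hw1 : ∀ i, w i false + w i true = 1) :
    ∑ β : ι → Bool, ∏ i, w i (β i) = 1 := by
  rw [← Fintype.prod_sum]
  simp [add_comm, hw1]

theorem sum_pinned_eq (hw1 : ∀ i, w i false + w i true = 1) (A : Finset ι) (τ : ι → Bool)
    (f : (ι → Bool) → ℝ) :
    ∑ β with ∀ i ∈ A, β i = τ i, (∏ i, w i (β i)) * f β =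
      (∏ i ∈ A, w i (τ i)) * ∑ β, (∏ i, w i (β i)) * f (A.piecewise τ β) := by
  set e := (Equiv.piEquivPiSubtypeProd (· ∈ A) fun _ => Bool).symm
  have he : ∀ σ γ i, e (σ, γ) i = if h : i ∈ A then σ ⟨i, h⟩ else γ ⟨i, h⟩ := fun _ _ _ => rfl
  have hW : ∀ σ γ, ∏ i, w i (e (σ, γ) i) =
      (∏ i : A, w i (σ i)) * ∏ i : {i // i ∉ A}, w i (γ i) := by
    intro σ γ
    rw [← Fintype.prod_subtype_mul_prod_subtype (· ∈ A)]
    congr 1 <;> exact prod_congr (by ext; simp) fun i _ => by simp [he, i.2]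
  have hpin : ∀ σ γ, A.piecewise τ (e (σ, γ)) = e (fun i => τ i, γ) := by
    intro σ γ
    ext i
    by_cases hi : i ∈ A <;> simp [he, hi]
  have hmem : ∀ σ γ, (∀ i ∈ A, e (σ, γ) i = τ i) ↔ (fun i : A => τ i) = σ := by
    intro σ γ
    rw [funext_iff, Subtype.forall]
    exact forall₂_congr fun i hi => by rw [he, dif_pos hi, eq_comm]
  have hσ : ∑ σ : A → Bool, ∏ i : A, w i (σ i) = 1 :=
    sum_prod_eq_one fun i => hw1 i
  rw [sum_filter, ← e.sum_comp, ← e.sum_comp, Fintype.sum_prod_type, Fintype.sum_prod_type]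
  simp only [hW, hpin, hmem, sum_comm (γ := A → Bool), Fintype.sum_ite_eq, mul_assoc, ← mul_sum,
    ← sum_mul, hσ, one_mul, ← prod_coe_sort A]

theorem sum_pinned_le (hw0 : ∀ i b, 0 ≤ w i b) (hw1 : ∀ i, w i false + w i true = 1)
    (A : Finset ι) (τ : ι → Bool) (E : Finset (ι → Bool))
    (hE : ∀ β, A.piecewise τ β ∈ E → β ∈ E) :
    ∑ β ∈ E with ∀ i ∈ A, β i = τ i, ∏ i, w i (β i) ≤
      (∏ i ∈ A, w i (τ i)) * ∑ β ∈ E, ∏ i, w i (β i) := by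
  have h := sum_pinned_eq hw1 A τ fun β => if β ∈ E then 1 else 0
  simp only [mul_ite, mul_one, mul_zero, ← sum_filter, filter_filter] at h
  calc ∑ β ∈ E with ∀ i ∈ A, β i = τ i, ∏ i, w i (β i)
      = ∑ β with (∀ i ∈ A, β i = τ i) ∧ β ∈ E, ∏ i, w i (β i) := by
        congr 1; ext β; simp [and_comm]
    _ = (∏ i ∈ A, w i (τ i)) * ∑ β with A.piecewise τ β ∈ E, ∏ i, w i (β i) := h
    _ ≤ (∏ i ∈ A, w i (τ i)) * ∑ β ∈ E, ∏ i, w i (β i) := by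
        gcongr
        · exact prod_nonneg fun i _ => hw0 i _
        · exact fun β _ _ => prod_nonneg fun i _ => hw0 i _
        · intro β hβ; simpa using hE β (mem_filter.1 hβ).2

end PinnedCoordinates

noncomputable def failProb (p : Var → ℝ) (D : Clause) : ℝ :=
  ∏ u ∈ D, if u.2 then 1 - p u.1 else p u.1

noncomputable def assignProb (p : Var → ℝ) (x : Var) (b : Bool) : ℝ := if b then p x else 1 - p x

def extend (V : Finset Var) (β : V → Bool) : Var → Bool :=
  fun x => if h : x ∈ V then β ⟨x, h⟩ else false

noncomputable def falsifying (V : Finset Var) (C : Clause) : Finset (V → Bool) :=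
  {β | ¬ SatC (extend V β) C}

def clauseVars (V : Finset Var) (C : Clause) : Finset V := (C.image Prod.fst).subtype (· ∈ V)

def falsifyingValue (C : Clause) (x : Var) : Bool := decide ((x, false) ∈ C)

section Clauses

variable {V : Finset Var} {C : Clause}

theorem mem_clauseVars {i : V} : i ∈ clauseVars V C ↔ ∃ b, (i.1, b) ∈ C := by
  simp [clauseVars]

theorem falsifyingValue_of_mem (hval : ClauseValid C) {x : Var} {b : Bool} (h : (x, b) ∈ C) :
    falsifyingValue C x = !b := by
  cases b
  · simpa [falsifyingValue] using h
  · simpa [falsifyingValue] using fun hf => hval x ⟨h, hf⟩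

theorem not_satC_extend_iff (hval : ClauseValid C) (hCV : ∀ u ∈ C, u.1 ∈ V) (β : V → Bool) :
    ¬ SatC (extend V β) C ↔ ∀ i ∈ clauseVars V C, β i = falsifyingValue C i := by
  simp only [SatC, not_exists, not_and, mem_clauseVars, forall_exists_index]
  constructor
  · intro h i b hib
    rw [falsifyingValue_of_mem hval hib]
    simpa [extend, i.2, Bool.eq_not] using h _ hib
  · rintro h ⟨x, b⟩ hxb
    have hx : x ∈ V := hCV _ hxb
    simpa [extend, hx, falsifyingValue_of_mem hval hxb, Bool.eq_not] using h ⟨x, hx⟩ b hxb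

theorem failProb_eq_prod (hval : ClauseValid C) (hCV : ∀ u ∈ C, u.1 ∈ V) (p : Var → ℝ) :
    failProb p C = ∏ i ∈ clauseVars V C, assignProb p i (falsifyingValue C i) := by
  refine prod_bij (fun u hu => ⟨u.1, hCV u hu⟩) (fun u hu => mem_clauseVars.2 ⟨u.2, hu⟩)
    ?_ ?_ ?_
  · rintro ⟨x, b⟩ hu ⟨y, c⟩ hv h
    simp only [Subtype.mk.injEq] at h
    subst h
    have := (falsifyingValue_of_mem hval hu).symm.trans (falsifyingValue_of_mem hval hv)
    simp_all
  · intro i hi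
    obtain ⟨b, hb⟩ := mem_clauseVars.1 hi
    exact ⟨_, hb, rfl⟩
  · rintro ⟨x, b⟩ hu
    cases b <;> simp [assignProb, falsifyingValue_of_mem hval hu]

theorem satC_of_satC_extend_piecewise {D : Clause} (hCD : ¬ Conflict C D) (β : V → Bool)
    (h : SatC (extend V ((clauseVars V C).piecewise (fun i => falsifyingValue C i) β)) D) :
    SatC (extend V β) D := by
  obtain ⟨⟨x, b⟩, hxb, hsat⟩ := h
  refine ⟨(x, b), hxb, ?_⟩
  by_cases hx : x ∈ V
  · by_cases hxC : (⟨x, hx⟩ : V) ∈ clauseVars V C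
    · exfalso
      obtain ⟨c, hc⟩ := mem_clauseVars.1 hxC
      simp only [extend, hx, dif_pos, piecewise_eq_of_mem _ _ _ hxC, falsifyingValue] at hsat
      subst hsat
      refine hCD ⟨x, ?_⟩
      cases c <;> cases hfx : decide ((x, false) ∈ C) <;> simp_all
    · simpa [extend, hx, hxC] using hsat
  · simpa [extend, hx] using hsat

end Clauses

theorem satC_of_not_clauseValid {C : Clause} (h : ¬ ClauseValid C) (α : Var → Bool) :
    SatC α C := by
  obtain ⟨x, hxt, hxf⟩ := not_forall_not.1 h
  cases hx : α x
  · exact ⟨(x, false), hxf, hx⟩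
  · exact ⟨(x, true), hxt, hx⟩

section ProductMeasure

variable {p : Var → ℝ} {V : Finset Var}

theorem assignProb_nonneg (hp : ∀ x, p x ∈ Set.Icc (0 : ℝ) 1) (x : Var) (b : Bool) :
    0 ≤ assignProb p x b := by
  cases b <;> simp [assignProb, (hp x).1, (hp x).2]

theorem assignProb_false_add_true (x : Var) : assignProb p x false + assignProb p x true = 1 := by
  simp [assignProb]

theorem failProb_nonneg (hp : ∀ x, p x ∈ Set.Icc (0 : ℝ) 1) (D : Clause) : 0 ≤ failProb p D :=
  prod_nonneg fun u _ => by
    have := assignProb_nonneg hp u.1 (!u.2)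
    cases h : u.2 <;> simp_all [assignProb]

theorem sum_falsifying_inter_avoiding_le (hp : ∀ x, p x ∈ Set.Icc (0 : ℝ) 1) {C : Clause}
    (hCV : ∀ u ∈ C, u.1 ∈ V) (S : Finset Clause) (hS : ∀ D ∈ S, ¬ Conflict C D) :
    ∑ β ∈ falsifying V C ∩ avoiding (falsifying V) S, ∏ i : V, assignProb p i (β i) ≤
      failProb p C * ∑ β ∈ avoiding (falsifying V) S, ∏ i : V, assignProb p i (β i) := by
  by_cases hval : ClauseValid C
  · have hpin : falsifying V C ∩ avoiding (falsifying V) S =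
        {β ∈ avoiding (falsifying V) S | ∀ i ∈ clauseVars V C, β i = falsifyingValue C i} := by
      ext β
      simp only [falsifying, mem_inter, mem_filter, mem_univ, true_and,
        not_satC_extend_iff hval hCV]
      exact and_comm
    rw [hpin, failProb_eq_prod hval hCV]
    refine sum_pinned_le (fun (i : V) b => assignProb_nonneg hp i b)
      (fun (i : V) => assignProb_false_add_true i)
      _ _ _ fun β hβ => ?_
    simp only [avoiding, falsifying, mem_filter, mem_univ, true_and, not_not] at hβ ⊢
    exact fun D hD => satC_of_satC_extend_piecewise (hS D hD) β (hβ D hD)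
  · have hempty : falsifying V C = ∅ := by
      simp [falsifying, satC_of_not_clauseValid hval]
    rw [hempty, empty_inter, sum_empty]
    exact mul_nonneg (failProb_nonneg hp C) (sum_nonneg fun β _ => prod_nonneg fun i _ =>
      assignProb_nonneg hp i (β i))

end ProductMeasure

theorem satisfiable_of_failProb_lt {F : CNF} {p : Var → ℝ} (hp : ∀ x, p x ∈ Set.Icc (0 : ℝ) 1)
    (hsum : ∀ C ∈ F, ∑ D ∈ F with Conflict C D, failProb p D ≤ 1 / 4)
    (hlt : ∀ C ∈ F, failProb p C < 1 / 2) : Satisfiable F := by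
  set V := varsOf F
  have hCV : ∀ C ∈ F, ∀ u ∈ C, u.1 ∈ V := fun C hC u hu =>
    mem_biUnion.2 ⟨C, hC, mem_image_of_mem Prod.fst hu⟩
  have hpos := sum_avoiding_pos (w := fun β : V → Bool => ∏ i : V, assignProb p i (β i))
    (fun β => prod_nonneg fun i _ => assignProb_nonneg hp i (β i))
    (by rw [sum_prod_eq_one fun (i : V) => assignProb_false_add_true i]; exact one_pos)
    (fun C _ => failProb_nonneg hp C) hlt hsum
    (fun C hC S _ hS => sum_falsifying_inter_avoiding_le hp (hCV C hC) S hS) F subset_rfl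
  obtain ⟨β, hβ⟩ := nonempty_of_sum_ne_zero hpos.ne'
  exact ⟨extend V β, by simpa [avoiding, falsifying] using hβ⟩

theorem Satisfiable.union_of_forall_not_conflict {G B : CNF} (hG : Satisfiable G)
    (hB : (∅ : Clause) ∉ B) (hconf : ∀ C ∈ G ∪ B, ∀ D ∈ B, ¬ Conflict C D) : Satisfiable (G ∪ B) := by
  obtain ⟨α, hα⟩ := hG
  -- Flip `α` wherever a clause of `B` needs it; as nothing conflicts with `B`, no literal of
  -- `G ∪ B` that was true becomes false.
  let α' : Var → Bool := fun x => if ∃ D ∈ B, (x, !α x) ∈ D then !α x else α x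
  have key : ∀ C ∈ G ∪ B, ∀ x b, (x, b) ∈ C → (α x = b ∨ ∃ D ∈ B, (x, b) ∈ D) → α' x = b := by
    intro C hC x b hxb h
    have hno : ¬ ∃ D ∈ B, (x, !b) ∈ D := fun ⟨D, hD, hx⟩ =>
      hconf C hC D hD ⟨x, by cases b <;> simp_all⟩
    rcases h with rfl | h
    · simp [α', hno]
    · cases hαx : α x <;> cases b <;> simp_all [α']
  refine ⟨α', fun C hC => ?_⟩
  rcases mem_union.1 hC with hCG | hCB
  · obtain ⟨⟨x, b⟩, hxb, hαx⟩ := hα C hCG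
    exact ⟨_, hxb, key C hC x b hxb (Or.inl hαx)⟩
  · obtain ⟨⟨x, b⟩, hxb⟩ := nonempty_iff_ne_empty.2 fun h => hB (h ▸ hCB)
    exact ⟨_, hxb, key C hC x b hxb (Or.inr ⟨C, hCB, hxb⟩)⟩

/-- SAT version of the lopsided Lovász Local Lemma: if for every clause `C` the failure
probabilities of the clauses conflicting with `C` sum to at most `1/4`, then `F` is
satisfiable. Here `∏_{u ∈ D} (1 - p(u))` is the probability that `D` is unsatisfied under
the product measure in which variable `x` is true with probability `p(x)`. -/
theorem stmt11 (F : CNF) (hemp : (∅ : Clause) ∉ F)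
    (p : Var → ℝ) (hp : ∀ x, p x ∈ Set.Icc (0 : ℝ) 1)
    (hsum : ∀ C ∈ F,
      ∑ D ∈ F.filter (fun D => Conflict C D),
        ∏ u ∈ D, (if u.2 then 1 - p u.1 else p u.1) ≤ 1 / 4) :
    Satisfiable F := by
  have hconf : ∀ C ∈ F, ∀ D ∈ F, 1 / 4 < failProb p D → ¬ Conflict C D :=
    fun C hC D hD hbig hCD => hbig.not_ge <|
      (single_le_sum (fun D _ => failProb_nonneg hp D) (mem_filter.2 ⟨hD, hCD⟩)).trans (hsum C hC)
  have hsmall : Satisfiable {C ∈ F | ¬ 1 / 4 < failProb p C} := by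
    refine satisfiable_of_failProb_lt hp (fun C hC => le_trans ?_ (hsum C (mem_filter.1 hC).1))
      fun C hC => by linarith [not_lt.1 (mem_filter.1 hC).2]
    exact sum_le_sum_of_subset_of_nonneg (filter_subset_filter _ (filter_subset _ _))
      fun D _ _ => failProb_nonneg hp D
  rw [← filter_union_filter_not_eq (fun C => 1 / 4 < failProb p C) F, union_comm]
  refine hsmall.union_of_forall_not_conflict (fun h => hemp (mem_filter.1 h).1) fun C hC D hD => ?_
  rw [union_comm, filter_union_filter_not_eq] at hC
  exact hconf C hC D (mem_filter.1 hD).1 (mem_filter.1 hD).2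
end

section
/- For every a > 1 and b ≥ a/(a−1), there is a constant c such that for all sufficiently large k there is an unsatisfiable k-CNF formula F with occ_F(x̄) ≤ c·k²·a^k and occ_F(x) ≤ c·k²·b^k for all variables x. -/
open scoped Classical

/-!
Take `m = 2k(k+1)` variables. Put all-positive `k`-clauses on a Turán `(m, t, k)`-system (every
`t`-set of variables contains a member) and all-negative ones on a Turán `(m, r, k)`-system, with
`t + r ≤ m + 1`: every assignment makes at least `t` variables false or at least `r` true, so it
falsifies a clause. A random tuple of `m u` members, `u ≈ C(m,k) / C(r,k)`, is such a system
in which every point lies in fewer than `4ku` members, and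
`C(m,k) / C(r,k) ≤ (m / (r + 1 - k))^k ≤ e β^k` once `r - k ≳ m / β`. Taking `β = a` on the
negative side and `β = b` on the positive side is possible because `1/a + 1/b ≤ 1`.
-/

open Finset Real

theorem add_pow_le_pow_mul_exp {x y : ℝ} (hy : 0 < y) (hxy : -y ≤ x) (N : ℕ) :
    (y + x) ^ N ≤ y ^ N * exp (x * N / y) := by
  have hstep : y + x ≤ y * exp (x / y) := by
    calc y + x = y * (x / y + 1) := by field_simp; ring
      _ ≤ y * exp (x / y) := mul_le_mul_of_nonneg_left (add_one_le_exp _) hy.le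
  calc (y + x) ^ N ≤ (y * exp (x / y)) ^ N := pow_le_pow_left₀ (by linarith) hstep N
    _ = y ^ N * exp (x * N / y) := by rw [mul_pow, ← exp_nat_mul]; ring_nf

theorem choose_mul_pow_mul_pow_le_add_pow {x y : ℝ} (hx : 0 ≤ x) (hy : 0 ≤ y) (N D : ℕ) :
    N.choose D * x ^ D * y ^ (N - D) ≤ (x + y) ^ N := by
  rcases le_or_gt D N with hDN | hND
  · rw [add_pow]
    calc (N.choose D : ℝ) * x ^ D * y ^ (N - D) = x ^ D * y ^ (N - D) * N.choose D := by ring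
      _ ≤ ∑ j ∈ range (N + 1), x ^ j * y ^ (N - j) * N.choose j :=
        single_le_sum (f := fun j => x ^ j * y ^ (N - j) * N.choose j) (fun j _ => by positivity)
          (mem_range.2 (Nat.lt_succ_of_le hDN))
  · rw [Nat.choose_eq_zero_of_lt hND, Nat.cast_zero, zero_mul, zero_mul]
    positivity

theorem two_pow_mul_exp_neg_lt_half {m : ℕ} (hm : 3 ≤ m) :
    (2 : ℝ) ^ m * exp (-m) < 1 / 2 := by
  have hq : 2 * exp (-1) < 3 / 4 := by linarith [exp_neg_one_lt_d9]
  calc (2 : ℝ) ^ m * exp (-m) = (2 * exp (-1)) ^ m := by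
        rw [mul_pow, ← exp_nat_mul]; ring_nf
    _ ≤ (2 * exp (-1)) ^ 3 := pow_le_pow_of_le_one (by positivity) (by linarith) hm
    _ < (3 / 4) ^ 3 := pow_lt_pow_left₀ hq (by positivity) (by norm_num)
    _ < 1 / 2 := by norm_num

theorem exp_four_mul_le (j : ℕ) : exp (4 * j) ≤ 64 ^ j := by
  have h : exp 4 ≤ 64 := by
    calc exp 4 = exp 1 ^ 4 := by rw [← exp_nat_mul]; norm_num
      _ ≤ 2.7182818286 ^ 4 := pow_le_pow_left₀ (exp_pos 1).le exp_one_lt_d9.le 4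
      _ ≤ 64 := by norm_num
  calc exp (4 * j) = exp 4 ^ j := by rw [← exp_nat_mul]; ring_nf
    _ ≤ 64 ^ j := pow_le_pow_left₀ (exp_pos 4).le h j

theorem two_mul_two_mul_mul_add_one_lt_four_pow {k : ℕ} (hk : 3 ≤ k) :
    2 * (2 * k * (k + 1)) < 4 ^ k := by
  induction k, hk using Nat.le_induction with
  | base => norm_num
  | succ k hk ih =>
    calc 2 * (2 * (k + 1) * (k + 1 + 1)) ≤ 4 * (2 * (2 * k * (k + 1))) := by nlinarith
      _ < 4 * 4 ^ k := by omega
      _ = 4 ^ (k + 1) := by ring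

theorem two_pow_mul_sub_pow_lt_half {n c : ℝ} {m u : ℕ} (hn : 0 < n) (hcn : c ≤ n)
    (hnu : n ≤ c * u) (hm : 3 ≤ m) : 2 ^ m * (n - c) ^ (m * u) < n ^ (m * u) / 2 := by
  have hexp : exp (-c * ↑(m * u) / n) ≤ exp (-m) := by
    refine exp_le_exp.2 ?_
    rw [div_le_iff₀ hn]
    push_cast
    nlinarith
  calc 2 ^ m * (n - c) ^ (m * u) = 2 ^ m * (n + -c) ^ (m * u) := by ring
    _ ≤ 2 ^ m * (n ^ (m * u) * exp (-m)) := by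
        refine mul_le_mul_of_nonneg_left ?_ (by positivity)
        exact (add_pow_le_pow_mul_exp hn (by linarith) _).trans
          (mul_le_mul_of_nonneg_left hexp (by positivity))
    _ = 2 ^ m * exp (-m) * n ^ (m * u) := by ring
    _ < 1 / 2 * n ^ (m * u) := by
        gcongr
        exact two_pow_mul_exp_neg_lt_half hm
    _ = n ^ (m * u) / 2 := by ring

theorem mul_choose_mul_pow_lt_half {n d : ℝ} {m k u : ℕ} (hn : 0 < n) (hd : 0 ≤ d)
    (hmd : m * d = k * n) (hu : 1 ≤ u) (hmk : 2 * m < 4 ^ k) :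
    m * ((m * u).choose (4 * k * u) * d ^ (4 * k * u) * n ^ (m * u - 4 * k * u))
      < n ^ (m * u) / 2 := by
  -- Chernoff-type tail bound: `4 ^ (4ku) * X` is one term of the binomial expansion of
  -- `(n + 4d) ^ (mu) ≤ n ^ (mu) * exp (4ku)`.
  set X := ((m * u).choose (4 * k * u) : ℝ) * d ^ (4 * k * u) * n ^ (m * u - 4 * k * u)
  have hexp : exp (4 * d * ↑(m * u) / n) ≤ 64 ^ (k * u) := by
    have : 4 * d * ↑(m * u) / n = 4 * ↑(k * u) := by
      push_cast; field_simp; linear_combination hmd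
    rw [this]
    exact exp_four_mul_le _
  have h4 : (4 : ℝ) ^ (4 * k * u) = 64 ^ (k * u) * 4 ^ (k * u) := by
    rw [show 4 * k * u = 3 * (k * u) + k * u by ring, pow_add, pow_mul]; norm_num
  have hX : X * 4 ^ (k * u) ≤ n ^ (m * u) := by
    refine le_of_mul_le_mul_right ?_ (by positivity : (0 : ℝ) < 64 ^ (k * u))
    calc X * 4 ^ (k * u) * 64 ^ (k * u)
        = ((m * u).choose (4 * k * u) : ℝ) * (4 * d) ^ (4 * k * u) * n ^ (m * u - 4 * k * u) := by
          rw [mul_pow, h4]; ring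
      _ ≤ (n + 4 * d) ^ (m * u) := by
          rw [add_comm]; exact choose_mul_pow_mul_pow_le_add_pow (by positivity) hn.le _ _
      _ ≤ n ^ (m * u) * 64 ^ (k * u) :=
          (add_pow_le_pow_mul_exp hn (by linarith) _).trans
            (mul_le_mul_of_nonneg_left hexp (by positivity))
  have hmk' : (2 * m : ℝ) < 4 ^ k := by exact_mod_cast hmk
  have hku : (4 : ℝ) ^ k ≤ 4 ^ (k * u) :=
    pow_le_pow_right₀ (by norm_num) (Nat.le_mul_of_pos_right k hu)
  have hX0 : 0 ≤ X := by positivity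
  have hnN : 0 < n ^ (m * u) := by positivity
  nlinarith

theorem choose_div_choose_le_three_mul_pow {m r k : ℕ} {β : ℝ} (hk : 0 < k) (hkr : k ≤ r)
    (hβ : 0 ≤ β) (hmr : (m * k : ℝ) ≤ (r + 1 - k) * β * (k + 1)) :
    ((m.choose k / r.choose k : ℕ) : ℝ) ≤ 3 * β ^ k := by
  have hk' : (0 : ℝ) < k := by exact_mod_cast hk
  have hrk : (0 : ℝ) < r + 1 - k := by
    have : (k : ℝ) ≤ r := by exact_mod_cast hkr
    linarith
  have hrk' : (((r + 1 - k : ℕ) : ℝ)) = r + 1 - k := by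
    rw [Nat.cast_sub (by omega)]; push_cast; ring
  calc ((m.choose k / r.choose k : ℕ) : ℝ) ≤ m.choose k / r.choose k := Nat.cast_div_le
    _ ≤ (m ^ k / k.factorial) / ((r + 1 - k) ^ k / k.factorial) := by
        refine div_le_div₀ (by positivity) (Nat.choose_le_pow_div k m) (by positivity) ?_
        simpa only [hrk'] using Nat.pow_le_choose (α := ℝ) k r
    _ = (m / (r + 1 - k)) ^ k := by
        rw [div_div_div_cancel_right₀ (by positivity), div_pow]
    _ ≤ (β * (1 + (k : ℝ)⁻¹)) ^ k := by
        refine pow_le_pow_left₀ (by positivity) ?_ k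
        rw [div_le_iff₀ hrk]
        field_simp
        linarith
    _ = β ^ k * (1 + (k : ℝ)⁻¹) ^ k := mul_pow _ _ _
    _ ≤ β ^ k * exp 1 := mul_le_mul_of_nonneg_left one_add_inv_pow_le_exp (by positivity)
    _ ≤ 3 * β ^ k := by nlinarith [exp_one_lt_d9, pow_nonneg hβ k]

theorem card_filter_piFinset_le_choose_mul {β : Type*} [DecidableEq β] (s : Finset β)
    (p : β → Prop) [DecidablePred p] (N D : ℕ) :
    #{f ∈ Fintype.piFinset (fun _ : Fin N => s) | D ≤ #{i | p (f i)}}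
      ≤ N.choose D * #{b ∈ s | p b} ^ D * #s ^ (N - D) := by
  calc _ ≤ #((univ.powersetCard D).biUnion fun I =>
          Fintype.piFinset fun i : Fin N => if i ∈ I then {b ∈ s | p b} else s) := by
        refine card_le_card fun f hf => ?_
        obtain ⟨hfs, hD⟩ := mem_filter.1 hf
        obtain ⟨I, hI, hIcard⟩ := exists_subset_card_eq hD
        refine mem_biUnion.2 ⟨I, mem_powersetCard.2 ⟨subset_univ I, hIcard⟩,
          Fintype.mem_piFinset.2 fun i => ?_⟩
        split_ifs with hi
        · exact mem_filter.2 ⟨Fintype.mem_piFinset.1 hfs i, (mem_filter.1 (hI hi)).2⟩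
        · exact Fintype.mem_piFinset.1 hfs i
    _ ≤ ∑ I ∈ univ.powersetCard D, ∏ i : Fin N, #(if i ∈ I then {b ∈ s | p b} else s) :=
        card_biUnion_le.trans (sum_le_sum fun I _ => (Fintype.card_piFinset _).le)
    _ = _ := by
        rw [sum_congr rfl fun I hI => ?_, sum_const, card_powersetCard, card_univ,
          Fintype.card_fin, smul_eq_mul, mul_assoc]
        rw [mem_powersetCard] at hI
        simp only [apply_ite card, prod_ite, prod_const, filter_mem_eq_inter, univ_inter,
          filter_notMem_eq_sdiff, card_univ_sdiff, Fintype.card_fin, hI.2]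

theorem card_filter_powersetCard_subset_of_subset {R s : Finset ℕ} (hR : R ⊆ s) (k : ℕ) :
    #{S ∈ s.powersetCard k | S ⊆ R} = (#R).choose k := by
  rw [← card_powersetCard]
  congr 1
  ext S
  simp only [mem_filter, mem_powersetCard]
  exact ⟨fun ⟨⟨_, h⟩, hSR⟩ => ⟨hSR, h⟩,
    fun ⟨hSR, h⟩ => ⟨⟨hSR.trans hR, h⟩, hSR⟩⟩

theorem card_biUnion_tuples_missing_le (m r k N : ℕ) :
    #((powersetCard r (range m)).biUnion fun R =>
        Fintype.piFinset fun _ : Fin N => {S ∈ powersetCard k (range m) | ¬ S ⊆ R})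
      ≤ 2 ^ m * (m.choose k - r.choose k) ^ N := by
  refine (card_biUnion_le_card_mul _ _ ((m.choose k - r.choose k) ^ N) fun R hR => ?_).trans ?_
  · obtain ⟨hRm, hRr⟩ := mem_powersetCard.1 hR
    rw [Fintype.card_piFinset, prod_const, card_univ, Fintype.card_fin, filter_not,
      card_sdiff_of_subset (filter_subset _ _), card_powersetCard, card_range,
      card_filter_powersetCard_subset_of_subset hRm, hRr]
  · rw [card_powersetCard, card_range]
    exact Nat.mul_le_mul_right _ (Nat.choose_le_two_pow m r)

theorem card_biUnion_tuples_heavy_le {m k : ℕ} (hk : 1 ≤ k) (N D : ℕ) :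
    #((range m).biUnion fun x =>
        {f ∈ Fintype.piFinset fun _ : Fin N => powersetCard k (range m) | D ≤ #{i | x ∈ f i}})
      ≤ m * (N.choose D * (m - 1).choose (k - 1) ^ D * m.choose k ^ (N - D)) := by
  refine (card_biUnion_le_card_mul _ _ _ fun x hx => ?_).trans (by rw [card_range])
  have hdeg : #{S ∈ powersetCard k (range m) | x ∈ S} = (m - 1).choose (k - 1) := by
    simpa [card_range] using card_filter_powersetCard_subset {x} (range m) k
      (singleton_subset_iff.2 hx) (by simpa using hk)
  simpa [hdeg, card_powersetCard, card_range] using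
    card_filter_piFinset_le_choose_mul (powersetCard k (range m)) (x ∈ ·) N D

theorem two_pow_mul_choose_sub_pow_add_lt_choose_pow {m r k u : ℕ} (hkr : k ≤ r) (hrm : r ≤ m)
    (hm : 3 ≤ m) (hmk : 2 * m < 4 ^ k) (hu : m.choose k ≤ r.choose k * u) :
    2 ^ m * (m.choose k - r.choose k) ^ (m * u) + m * ((m * u).choose (4 * k * u) *
      (m - 1).choose (k - 1) ^ (4 * k * u) * m.choose k ^ (m * u - 4 * k * u))
      < m.choose k ^ (m * u) := by
  have hk : 1 ≤ k := Nat.pos_of_ne_zero (by rintro rfl; simp at hmk; omega)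
  have hn : 0 < m.choose k := Nat.choose_pos (hkr.trans hrm)
  have hu1 : 1 ≤ u := Nat.pos_of_ne_zero (by rintro rfl; omega)
  have hmd : m * (m - 1).choose (k - 1) = k * m.choose k := by
    have := Nat.add_one_mul_choose_eq (m - 1) (k - 1)
    rwa [Nat.sub_add_cancel (by omega), Nat.sub_add_cancel hk, mul_comm _ k] at this
  have hmissing := two_pow_mul_sub_pow_lt_half (n := (m.choose k : ℝ)) (c := r.choose k)
    (by exact_mod_cast hn) (by exact_mod_cast Nat.choose_le_choose k hrm)
    (by exact_mod_cast hu) hm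
  have hheavy := mul_choose_mul_pow_lt_half (n := (m.choose k : ℝ))
    (d := ((m - 1).choose (k - 1) : ℝ)) (by exact_mod_cast hn) (by positivity)
    (by exact_mod_cast hmd) hu1 hmk
  rw [← Nat.cast_lt (α := ℝ)]
  push_cast [Nat.cast_sub (Nat.choose_le_choose k hrm)]
  linarith

theorem exists_covering_tuple_with_few_hits {m r k u : ℕ} (hkr : k ≤ r) (hrm : r ≤ m)
    (hm : 3 ≤ m) (hmk : 2 * m < 4 ^ k) (hu : m.choose k ≤ r.choose k * u) :
    ∃ f : Fin (m * u) → Finset ℕ, (∀ i, f i ∈ powersetCard k (range m)) ∧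
      (∀ R ∈ powersetCard r (range m), ∃ i, f i ⊆ R) ∧
      ∀ x ∈ range m, #{i | x ∈ f i} < 4 * k * u := by
  have hk : 1 ≤ k := Nat.pos_of_ne_zero (by rintro rfl; simp at hmk; omega)
  set missing := (powersetCard r (range m)).biUnion fun R =>
    Fintype.piFinset fun _ : Fin (m * u) => {S ∈ powersetCard k (range m) | ¬ S ⊆ R}
  set heavy := (range m).biUnion fun x =>
    {f ∈ Fintype.piFinset fun _ : Fin (m * u) => powersetCard k (range m) |
      4 * k * u ≤ #{i | x ∈ f i}}
  -- Fewer than half of all `mu`-tuples of `k`-sets miss some `r`-set, and fewer than half hit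
  -- some point `4ku` times.
  have hcard : #(missing ∪ heavy) <
      #(Fintype.piFinset fun _ : Fin (m * u) => powersetCard k (range m)) := by
    rw [Fintype.card_piFinset, prod_const, card_univ, Fintype.card_fin, card_powersetCard,
      card_range]
    exact (card_union_le _ _).trans_lt <| (add_le_add
      (card_biUnion_tuples_missing_le m r k (m * u))
      (card_biUnion_tuples_heavy_le hk (m * u) (4 * k * u))).trans_lt
      (two_pow_mul_choose_sub_pow_add_lt_choose_pow hkr hrm hm hmk hu)
  obtain ⟨f, hf, hf_good⟩ := exists_mem_notMem_of_card_lt_card hcard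
  rw [mem_union, not_or] at hf_good
  refine ⟨f, Fintype.mem_piFinset.1 hf, fun R hR => ?_, fun x hx => ?_⟩
  · by_contra! h
    exact hf_good.1 (mem_biUnion.2 ⟨R, hR, Fintype.mem_piFinset.2 fun i =>
      mem_filter.2 ⟨Fintype.mem_piFinset.1 hf i, h i⟩⟩)
  · by_contra! h
    exact hf_good.2 (mem_biUnion.2 ⟨x, hx, mem_filter.2 ⟨hf, h⟩⟩)

def IsTuranSystem (m r k : ℕ) (G : Finset (Finset ℕ)) : Prop :=
  G ⊆ (range m).powersetCard k ∧ ∀ R ∈ (range m).powersetCard r, ∃ S ∈ G, S ⊆ R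

def familyDegree (G : Finset (Finset ℕ)) (x : ℕ) : ℕ := #{S ∈ G | x ∈ S}

theorem exists_isTuranSystem_familyDegree_le {m r k u : ℕ} (hkr : k ≤ r) (hrm : r ≤ m)
    (hm : 3 ≤ m) (hmk : 2 * m < 4 ^ k) (hu : m.choose k ≤ r.choose k * u) :
    ∃ G, IsTuranSystem m r k G ∧ ∀ x, familyDegree G x ≤ 4 * k * u := by
  obtain ⟨f, hfA, hcover, hlight⟩ := exists_covering_tuple_with_few_hits hkr hrm hm hmk hu
  refine ⟨univ.image f, ⟨image_subset_iff.2 fun i _ => hfA i, fun R hR => ?_⟩, fun x => ?_⟩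
  · obtain ⟨i, hi⟩ := hcover R hR
    exact ⟨f i, mem_image_of_mem f (mem_univ i), hi⟩
  have hdeg : familyDegree (univ.image f) x ≤ #{i | x ∈ f i} := by
    rw [familyDegree, filter_image]
    exact card_image_le
  refine hdeg.trans ?_
  by_cases hx : x ∈ range m
  · exact (hlight x hx).le
  · rw [card_eq_zero.2 (filter_eq_empty_iff.2 fun i _ hxi =>
      hx ((mem_powersetCard.1 (hfA i)).1 hxi))]
    exact Nat.zero_le _

theorem exists_isTuranSystem_familyDegree_le_pow {m r k : ℕ} {β : ℝ} (hβ : 1 ≤ β)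
    (hkr : k ≤ r) (hrm : r ≤ m) (hm : 3 ≤ m) (hmk : 2 * m < 4 ^ k)
    (hmr : (m * k : ℝ) ≤ (r + 1 - k) * β * (k + 1)) :
    ∃ G, IsTuranSystem m r k G ∧ ∀ x, (familyDegree G x : ℝ) ≤ 16 * k * β ^ k := by
  have hk : 0 < k := Nat.pos_of_ne_zero (by rintro rfl; simp at hmk; omega)
  have hc : 0 < r.choose k := Nat.choose_pos hkr
  obtain ⟨G, hG, hdeg⟩ := exists_isTuranSystem_familyDegree_le
    (u := m.choose k / r.choose k + 1) hkr hrm hm hmk (Nat.lt_mul_div_succ _ hc).le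
  refine ⟨G, hG, fun x => ?_⟩
  have hq := choose_div_choose_le_three_mul_pow hk hkr (by linarith) hmr
  have hβk : 1 ≤ β ^ k := one_le_pow₀ hβ
  calc (familyDegree G x : ℝ) ≤ 4 * k * ((m.choose k / r.choose k : ℕ) + 1) := by
        exact_mod_cast hdeg x
    _ ≤ 4 * k * (4 * β ^ k) := by gcongr; linarith
    _ = 16 * k * β ^ k := by ring

def signedClauses (c : Bool) (G : Finset (Finset ℕ)) : CNF :=
  G.image fun S => S.image fun x => (x, c)

theorem IsKCNF.union {k : ℕ} {F G : CNF} (hF : IsKCNF k F) (hG : IsKCNF k G) :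
    IsKCNF k (F ∪ G) :=
  fun C hC => (mem_union.1 hC).elim (hF C) (hG C)

theorem isKCNF_signedClauses {m r k : ℕ} {G : Finset (Finset ℕ)} (hG : IsTuranSystem m r k G)
    (c : Bool) : IsKCNF k (signedClauses c G) := by
  intro C hC
  obtain ⟨S, hS, rfl⟩ := mem_image.1 hC
  refine ⟨?_, fun x ⟨hxt, hxf⟩ => ?_⟩
  · rw [card_image_of_injective _ (Prod.mk_left_injective c)]
    exact (mem_powersetCard.1 (hG.1 hS)).2
  · simp only [mem_image, Prod.mk.injEq] at hxt hxf
    obtain ⟨_, _, _, hct⟩ := hxt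
    obtain ⟨_, _, _, hcf⟩ := hxf
    exact Bool.noConfusion (hct.symm.trans hcf)

theorem occ_union_le (F G : CNF) (u : Lit) : occ (F ∪ G) u ≤ occ F u + occ G u := by
  rw [occ, occ, occ, filter_union]
  exact card_union_le _ _

theorem occ_signedClauses_le (c : Bool) (G : Finset (Finset ℕ)) (x : Var) :
    occ (signedClauses c G) (x, c) ≤ familyDegree G x := by
  rw [occ, signedClauses, filter_image]
  refine card_image_le.trans (card_le_card fun S hS => ?_)
  rw [mem_filter] at hS ⊢
  exact ⟨hS.1, by simpa using hS.2⟩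

theorem occ_signedClauses_of_ne {c d : Bool} (hdc : d ≠ c) (G : Finset (Finset ℕ)) (x : Var) :
    occ (signedClauses c G) (x, d) = 0 := by
  rw [occ, signedClauses, card_eq_zero, filter_eq_empty_iff]
  intro C hC hxC
  obtain ⟨S, -, rfl⟩ := mem_image.1 hC
  simp only [mem_image, Prod.mk.injEq] at hxC
  obtain ⟨_, _, _, hcd⟩ := hxC
  exact hdc hcd.symm

theorem occ_signedClauses_union_le (Gp Gn : Finset (Finset ℕ)) (x : Var) :
    occ (signedClauses true Gp ∪ signedClauses false Gn) (x, true) ≤ familyDegree Gp x ∧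
      occ (signedClauses true Gp ∪ signedClauses false Gn) (x, false) ≤ familyDegree Gn x := by
  constructor
  · have := occ_union_le (signedClauses true Gp) (signedClauses false Gn) (x, true)
    rw [occ_signedClauses_of_ne (c := false) (d := true) (by decide), add_zero] at this
    exact this.trans (occ_signedClauses_le true Gp x)
  · have := occ_union_le (signedClauses true Gp) (signedClauses false Gn) (x, false)
    rw [occ_signedClauses_of_ne (c := true) (d := false) (by decide), zero_add] at this
    exact this.trans (occ_signedClauses_le false Gn x)

theorem exists_signedClause_not_satC {m r k : ℕ} {G : Finset (Finset ℕ)}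
    (hG : IsTuranSystem m r k G) (c : Bool) (α : Var → Bool)
    (hα : r ≤ #{x ∈ range m | α x ≠ c}) : ∃ C ∈ signedClauses c G, ¬ SatC α C := by
  obtain ⟨R, hR, hRcard⟩ := exists_subset_card_eq hα
  obtain ⟨S, hS, hSR⟩ := hG.2 R (mem_powersetCard.2 ⟨hR.trans (filter_subset _ _), hRcard⟩)
  refine ⟨_, mem_image_of_mem _ hS, ?_⟩
  rintro ⟨l, hl, hsat⟩
  obtain ⟨x, hx, rfl⟩ := mem_image.1 hl
  exact (mem_filter.1 (hR (hSR hx))).2 hsat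

theorem not_satisfiable_signedClauses_union {m t r k : ℕ} {Gp Gn : Finset (Finset ℕ)}
    (hGp : IsTuranSystem m t k Gp) (hGn : IsTuranSystem m r k Gn) (htr : t + r ≤ m + 1) :
    ¬ Satisfiable (signedClauses true Gp ∪ signedClauses false Gn) := by
  rintro ⟨α, hα⟩
  have hsplit : #{x ∈ range m | α x ≠ true} + #{x ∈ range m | α x ≠ false} = m := by
    simpa [card_range] using card_filter_add_card_filter_not (s := range m) (α · ≠ true)
  obtain ⟨C, hC, hCα⟩ :
      ∃ C ∈ signedClauses true Gp ∪ signedClauses false Gn, ¬ SatC α C := by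
    rcases le_or_gt t #{x ∈ range m | α x ≠ true} with h | h
    · obtain ⟨C, hC, hCα⟩ := exists_signedClause_not_satC hGp true α h
      exact ⟨C, mem_union_left _ hC, hCα⟩
    · obtain ⟨C, hC, hCα⟩ := exists_signedClause_not_satC hGn false α (by omega)
      exact ⟨C, mem_union_right _ hC, hCα⟩
  exact hCα (hα C hC)

theorem exists_turan_thresholds {a b : ℝ} (ha : 0 < a) (hb : 0 < b) (hab : a⁻¹ + b⁻¹ ≤ 1)
    {k m : ℕ} (hm : 2 * k * (k + 1) ≤ m) :
    ∃ t r : ℕ, k ≤ t ∧ k ≤ r ∧ t + r ≤ m + 1 ∧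
      (m * k : ℝ) ≤ (t + 1 - k) * b * (k + 1) ∧
      (m * k : ℝ) ≤ (r + 1 - k) * a * (k + 1) := by
  set x : ℝ := m * k / (b * (k + 1))
  set y : ℝ := m * k / (a * (k + 1))
  have hx : 0 ≤ x := by positivity
  have hy : 0 ≤ y := by positivity
  have hmR : (2 * k * (k + 1) : ℝ) ≤ m := by exact_mod_cast hm
  refine ⟨k + ⌊x⌋₊, k + ⌊y⌋₊, le_add_right le_rfl, le_add_right le_rfl, ?_, ?_, ?_⟩
  · have hxy : x + y ≤ m * k / (k + 1) := by
      calc x + y = m * k / (k + 1) * (a⁻¹ + b⁻¹) := by simp only [x, y]; field_simp; ring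
        _ ≤ m * k / (k + 1) := mul_le_of_le_one_right (by positivity) hab
    have hfloor : (⌊x⌋₊ + ⌊y⌋₊ : ℝ) ≤ m * k / (k + 1) :=
      (add_le_add (Nat.floor_le hx) (Nat.floor_le hy)).trans hxy
    rw [le_div_iff₀ (by positivity)] at hfloor
    have : ((k + ⌊x⌋₊ + (k + ⌊y⌋₊) : ℕ) : ℝ) ≤ m + 1 := by push_cast; nlinarith
    exact_mod_cast this
  · have := Nat.lt_floor_add_one x
    calc (m * k : ℝ) = x * b * (k + 1) := by simp only [x]; field_simp
      _ ≤ (↑(k + ⌊x⌋₊) + 1 - k) * b * (k + 1) := by push_cast; gcongr; linarith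
  · have := Nat.lt_floor_add_one y
    calc (m * k : ℝ) = y * a * (k + 1) := by simp only [y]; field_simp
      _ ≤ (↑(k + ⌊y⌋₊) + 1 - k) * a * (k + 1) := by push_cast; gcongr; linarith

/-- For every `a > 1` and `b ≥ a/(a-1)` there is a constant `c` such that for all
sufficiently large `k` there is an unsatisfiable `k`-CNF formula `F` with
`occ_F(x̄) ≤ c k² a^k` and `occ_F(x) ≤ c k² b^k` for all variables `x`. -/
theorem stmt13 (a b : ℝ) (ha : 1 < a) (hb : b ≥ a / (a - 1)) :
    ∃ c : ℝ, ∃ k₀ : ℕ, ∀ k ≥ k₀, ∃ F : CNF, IsKCNF k F ∧ ¬ Satisfiable F ∧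
      ∀ x : Var, (occ F (x, false) : ℝ) ≤ c * k ^ 2 * a ^ k ∧
                 (occ F (x, true) : ℝ) ≤ c * k ^ 2 * b ^ k := by
  have hb1 : 1 < b := lt_of_lt_of_le (by rw [lt_div_iff₀ (by linarith)]; linarith) hb
  have hab : a⁻¹ + b⁻¹ ≤ 1 := by
    have := inv_anti₀ (by positivity) hb
    rw [inv_div, sub_div, div_self (by positivity), one_div] at this
    linarith
  refine ⟨16, 3, fun k hk => ?_⟩
  have hm : 3 ≤ 2 * k * (k + 1) := by nlinarith
  have hmk := two_mul_two_mul_mul_add_one_lt_four_pow hk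
  obtain ⟨t, r, hkt, hkr, htr, ht, hr⟩ :=
    exists_turan_thresholds (by linarith) (by linarith) hab le_rfl
  obtain ⟨Gp, hGp, hdegp⟩ :=
    exists_isTuranSystem_familyDegree_le_pow hb1.le hkt (by omega) hm hmk ht
  obtain ⟨Gn, hGn, hdegn⟩ :=
    exists_isTuranSystem_familyDegree_le_pow ha.le hkr (by omega) hm hmk hr
  have hk2 : ∀ β : ℝ, 0 ≤ β → 16 * k * β ^ k ≤ 16 * k ^ 2 * β ^ k := fun β hβ => by
    have hk1 : (1 : ℝ) ≤ k := by exact_mod_cast (by omega : 1 ≤ k)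
    have : (k : ℝ) ≤ k ^ 2 := by nlinarith
    gcongr
  refine ⟨signedClauses true Gp ∪ signedClauses false Gn,
    (isKCNF_signedClauses hGp true).union (isKCNF_signedClauses hGn false),
    not_satisfiable_signedClauses_union hGp hGn htr, fun x => ⟨?_, ?_⟩⟩
  · exact (Nat.cast_le.2 (occ_signedClauses_union_le Gp Gn x).2).trans
      ((hdegn x).trans (hk2 a (by linarith)))
  · exact (Nat.cast_le.2 (occ_signedClauses_union_le Gp Gn x).1).trans
      ((hdegp x).trans (hk2 b (by linarith)))
end

section
/- For k ≥ 1 and f_k(t) = t·(1−t)^{1/k} on [0,1]: (i) f_k attains its unique maximum at t = k/(k+1); (ii) f_k(t) ≤ t with equality iff t = 0; (iii) for every ℓ ≥ 0 and t ∈ [0,1], (1−t)^{ℓ/k}·t ≤ f_k^{(ℓ)}(t) ≤ (1−f_k^{(ℓ)}(t))^{ℓ/k}·t, where f_k^{(ℓ)} is the ℓ-fold iterate of f_k. -/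
open scoped Classical

/-
Write `f(t) = t (1 - t)^p` with `p > 0` and `T = 1/(1+p)`. The maximum comes from weighted
AM-GM with weights `T, 1 - T` applied to `t/T` and `(1-t)/(1-T)`, whose arithmetic mean is `1`:
the geometric mean raised to the power `1 + p` is exactly `f(t)/f(T)`. The iterate bounds follow
by induction from `f(s) ≤ s` and the monotonicity of `s ↦ (1 - s)^p`: the orbit stays below `t`,
so each step multiplies by at least `(1 - t)^p`, and it decreases, so each step multiplies by at
most `(1 - f^ℓ(t))^p`.
-/

open Set Real

noncomputable def dampMap (p t : ℝ) : ℝ := t * (1 - t) ^ p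

section

variable {p t : ℝ}

lemma dampMap_le_self (hp : 0 ≤ p) (ht : t ∈ Icc (0 : ℝ) 1) : dampMap p t ≤ t :=
  mul_le_of_le_one_right ht.1 (rpow_le_one (by linarith [ht.2]) (by linarith [ht.1]) hp)

lemma dampMap_lt_self (hp : 0 < p) (ht₀ : 0 < t) (ht₁ : t ≤ 1) : dampMap p t < t :=
  mul_lt_of_lt_one_right ht₀ (rpow_lt_one (by linarith) (by linarith) hp)

lemma dampMap_eq_self_iff (hp : 0 < p) (ht : t ∈ Icc (0 : ℝ) 1) : dampMap p t = t ↔ t = 0 := by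
  refine ⟨fun h => ?_, fun h => by simp [dampMap, h]⟩
  by_contra h₀
  exact (dampMap_lt_self hp (lt_of_le_of_ne ht.1 (Ne.symm h₀)) ht.2).ne h

lemma mapsTo_dampMap (hp : 0 ≤ p) : MapsTo (dampMap p) (Icc 0 1) (Icc 0 1) := fun _ ht =>
  ⟨mul_nonneg ht.1 (rpow_nonneg (by linarith [ht.2]) _), (dampMap_le_self hp ht).trans ht.2⟩

lemma dampMap_lt_dampMap_inv_one_add (hp : 0 < p) (ht : t ∈ Icc (0 : ℝ) 1)
    (hne : t ≠ (1 + p)⁻¹) : dampMap p t < dampMap p (1 + p)⁻¹ := by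
  set T := (1 + p)⁻¹ with hT
  have hT₀ : 0 < T := by positivity
  have hT₁ : 0 < 1 - T := by rw [hT, sub_pos]; exact inv_lt_one_of_one_lt₀ (by linarith)
  have hTp : T * (1 + p) = 1 := inv_mul_cancel₀ (by positivity)
  have h₁ : 0 ≤ t / T := div_nonneg ht.1 hT₀.le
  have h₂ : 0 ≤ (1 - t) / (1 - T) := div_nonneg (by linarith [ht.2]) hT₁.le
  have amgm : (t / T) ^ T * ((1 - t) / (1 - T)) ^ (1 - T) < 1 := by
    have hdiff : t / T ≠ (1 - t) / (1 - T) := by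
      rw [Ne, div_eq_div_iff hT₀.ne' hT₁.ne']
      intro h
      exact hne (by linarith)
    have := (geom_mean_lt_arith_mean2_weighted_iff_of_pos hT₀ hT₁ h₁ h₂ (by ring)).2 hdiff
    rwa [mul_div_cancel₀ _ hT₀.ne', mul_div_cancel₀ _ hT₁.ne', add_sub_cancel] at this
  have key : ((t / T) ^ T * ((1 - t) / (1 - T)) ^ (1 - T)) ^ (1 + p) =
      dampMap p t / dampMap p T := by
    have hTp' : (1 - T) * (1 + p) = p := by linarith
    rw [mul_rpow (rpow_nonneg h₁ _) (rpow_nonneg h₂ _), ← rpow_mul h₁, ← rpow_mul h₂, hTp, hTp',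
      rpow_one, div_rpow (by linarith [ht.2]) hT₁.le, dampMap, dampMap, div_mul_div_comm]
  have hlt : dampMap p t / dampMap p T < 1 :=
    key ▸ rpow_lt_one (mul_nonneg (rpow_nonneg h₁ _) (rpow_nonneg h₂ _)) amgm (by positivity)
  rwa [div_lt_one (show 0 < dampMap p T from mul_pos hT₀ (rpow_pos_of_pos hT₁ _))] at hlt

lemma dampMap_le_dampMap_inv_one_add (hp : 0 < p) (ht : t ∈ Icc (0 : ℝ) 1) :
    dampMap p t ≤ dampMap p (1 + p)⁻¹ := by
  rcases eq_or_ne t (1 + p)⁻¹ with rfl | hne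
  · rfl
  · exact (dampMap_lt_dampMap_inv_one_add hp ht hne).le

lemma dampMap_eq_dampMap_inv_one_add_iff (hp : 0 < p) (ht : t ∈ Icc (0 : ℝ) 1) :
    dampMap p t = dampMap p (1 + p)⁻¹ ↔ t = (1 + p)⁻¹ := by
  refine ⟨fun h => ?_, fun h => h ▸ rfl⟩
  by_contra hne
  exact (dampMap_lt_dampMap_inv_one_add hp ht hne).ne h

lemma iterate_dampMap_le_self (hp : 0 ≤ p) (ht : t ∈ Icc (0 : ℝ) 1) (l : ℕ) :
    (dampMap p)^[l] t ≤ t := by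
  induction l with
  | zero => rfl
  | succ l ih =>
    rw [Function.iterate_succ_apply']
    exact (dampMap_le_self hp ((mapsTo_dampMap hp).iterate l ht)).trans ih

lemma one_sub_rpow_pow_mul_le_iterate_dampMap (hp : 0 ≤ p) (ht : t ∈ Icc (0 : ℝ) 1) (l : ℕ) :
    ((1 - t) ^ p) ^ l * t ≤ (dampMap p)^[l] t := by
  induction l with
  | zero => simp
  | succ l ih =>
    rw [Function.iterate_succ_apply', pow_succ, mul_right_comm]
    have hs := (mapsTo_dampMap hp).iterate l ht
    exact mul_le_mul ih (rpow_le_rpow (by linarith [ht.2])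
      (by linarith [iterate_dampMap_le_self hp ht l]) hp) (rpow_nonneg (by linarith [ht.2]) _) hs.1

lemma iterate_dampMap_le_one_sub_rpow_pow_mul (hp : 0 ≤ p) (ht : t ∈ Icc (0 : ℝ) 1) (l : ℕ) :
    (dampMap p)^[l] t ≤ ((1 - (dampMap p)^[l] t) ^ p) ^ l * t := by
  induction l with
  | zero => simp
  | succ l ih =>
    rw [Function.iterate_succ_apply']
    set s := (dampMap p)^[l] t
    have hs := (mapsTo_dampMap hp).iterate l ht
    have h₁ : 0 ≤ 1 - s := by linarith [hs.2]
    calc dampMap p s ≤ ((1 - s) ^ p) ^ l * t * (1 - s) ^ p :=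
          mul_le_mul_of_nonneg_right ih (rpow_nonneg h₁ _)
      _ = ((1 - s) ^ p) ^ (l + 1) * t := by ring
      _ ≤ ((1 - dampMap p s) ^ p) ^ (l + 1) * t :=
          mul_le_mul_of_nonneg_right (pow_le_pow_left₀ (rpow_nonneg h₁ _)
            (rpow_le_rpow h₁ (by linarith [dampMap_le_self hp hs]) hp) _) ht.1

end

/-- Basic properties of `f_k(t) = t (1-t)^{1/k}` on `[0,1]`:
(i) unique maximum at `t = k/(k+1)`; (ii) `f_k(t) ≤ t` with equality iff `t = 0`;
(iii) `(1-t)^{ℓ/k} t ≤ f_k^{(ℓ)}(t) ≤ (1 - f_k^{(ℓ)}(t))^{ℓ/k} t`. -/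
theorem stmt17 (k : ℕ) (hk : 1 ≤ k) :
    (∀ t ∈ Set.Icc (0 : ℝ) 1,
      (fun t : ℝ => t * (1 - t) ^ ((1 : ℝ) / k)) t ≤
        (fun t : ℝ => t * (1 - t) ^ ((1 : ℝ) / k)) ((k : ℝ) / (k + 1)) ∧
      ((fun t : ℝ => t * (1 - t) ^ ((1 : ℝ) / k)) t =
        (fun t : ℝ => t * (1 - t) ^ ((1 : ℝ) / k)) ((k : ℝ) / (k + 1)) → t = (k : ℝ) / (k + 1))) ∧
    (∀ t ∈ Set.Icc (0 : ℝ) 1,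
      t * (1 - t) ^ ((1 : ℝ) / k) ≤ t ∧ (t * (1 - t) ^ ((1 : ℝ) / k) = t ↔ t = 0)) ∧
    (∀ l : ℕ, ∀ t ∈ Set.Icc (0 : ℝ) 1,
      (1 - t) ^ ((l : ℝ) / k) * t ≤ (fun t : ℝ => t * (1 - t) ^ ((1 : ℝ) / k))^[l] t ∧
      (fun t : ℝ => t * (1 - t) ^ ((1 : ℝ) / k))^[l] t ≤
        (1 - (fun t : ℝ => t * (1 - t) ^ ((1 : ℝ) / k))^[l] t) ^ ((l : ℝ) / k) * t) := by
  have hp : (0 : ℝ) < 1 / k := by positivity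
  have hT : (k : ℝ) / (k + 1) = (1 + 1 / (k : ℝ))⁻¹ := by field_simp
  rw [show (fun t : ℝ => t * (1 - t) ^ ((1 : ℝ) / k)) = dampMap (1 / k) from rfl]
  have hpow : ∀ l : ℕ, ∀ x : ℝ, 0 ≤ x → x ^ ((l : ℝ) / k) = (x ^ ((1 : ℝ) / k)) ^ l :=
    fun l x hx => by rw [← rpow_mul_natCast hx]; ring_nf
  refine ⟨fun t ht => ?_, fun t ht => ⟨dampMap_le_self hp.le ht, dampMap_eq_self_iff hp ht⟩,
    fun l t ht => ?_⟩
  · rw [hT]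
    exact ⟨dampMap_le_dampMap_inv_one_add hp ht, (dampMap_eq_dampMap_inv_one_add_iff hp ht).1⟩
  · have hs := (mapsTo_dampMap hp.le).iterate l ht
    rw [hpow l _ (by linarith [ht.2]), hpow l _ (by linarith [hs.2])]
    exact ⟨one_sub_rpow_pow_mul_le_iterate_dampMap hp.le ht l,
      iterate_dampMap_le_one_sub_rpow_pow_mul hp.le ht l⟩
end

section
/- For every k ≥ 2 and every t ∈ [0,1], the (k−1)-fold iterate of f_k(t) = t·(1−t)^{1/k} satisfies f_k^{(k−1)}(t) ≤ 1/2. -/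
/-!
Write `f = f_k`. Then `f s ≤ s` and `(f s)^k = s^k (1 - s)`, so along the orbit of `t` the `k`-th
power is multiplied by `1 - x ≤ 1/2` at every step at which the current point `x` exceeds `1/2`.
Starting from `(f t)^k ≤ t (1 - t) ≤ 1/4`, an orbit point `f^[k-1] t > 1/2` would have
`k`-th power at most `(1/2)^k`, which is absurd.
-/

open scoped Classical

noncomputable def mulOneSubRoot (k : ℕ) (t : ℝ) : ℝ := t * (1 - t) ^ ((1 : ℝ) / k)

section mulOneSubRoot

variable {k : ℕ} {s t : ℝ}

lemma mulOneSubRoot_nonneg (hs₀ : 0 ≤ s) (hs₁ : s ≤ 1) : 0 ≤ mulOneSubRoot k s :=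
  mul_nonneg hs₀ (Real.rpow_nonneg (by linarith) _)

lemma mulOneSubRoot_le_self (hs₀ : 0 ≤ s) (hs₁ : s ≤ 1) : mulOneSubRoot k s ≤ s :=
  mul_le_of_le_one_right hs₀ (Real.rpow_le_one (by linarith) (by linarith) (by positivity))

lemma mapsTo_mulOneSubRoot : Set.MapsTo (mulOneSubRoot k) (Set.Icc 0 1) (Set.Icc 0 1) :=
  fun _ ⟨hs₀, hs₁⟩ ↦ ⟨mulOneSubRoot_nonneg hs₀ hs₁, (mulOneSubRoot_le_self hs₀ hs₁).trans hs₁⟩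

lemma mulOneSubRoot_pow (hk : k ≠ 0) (hs₁ : s ≤ 1) :
    mulOneSubRoot k s ^ k = s ^ k * (1 - s) := by
  rw [mulOneSubRoot, mul_pow, ← Real.rpow_natCast ((1 - s) ^ _), ← Real.rpow_mul (by linarith),
    one_div_mul_cancel (Nat.cast_ne_zero.mpr hk), Real.rpow_one]

lemma iterate_mulOneSubRoot_pow_le (hk : k ≠ 0) (ht : t ∈ Set.Icc 0 1) (n : ℕ)
    (hhalf : 1 / 2 < (mulOneSubRoot k)^[n + 1] t) :
    ((mulOneSubRoot k)^[n + 1] t) ^ k ≤ (1 / 2) ^ (n + 2) := by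
  induction n with
  | zero =>
    obtain ⟨ht₀, ht₁⟩ := ht
    rw [Function.iterate_one, mulOneSubRoot_pow hk ht₁]
    have htk : t ^ k ≤ t := pow_le_of_le_one ht₀ ht₁ hk
    nlinarith [mul_le_mul_of_nonneg_right htk (sub_nonneg.mpr ht₁), sq_nonneg (t - 1 / 2)]
  | succ n ih =>
    set x := (mulOneSubRoot k)^[n + 1] t
    obtain ⟨hx₀, hx₁⟩ : x ∈ Set.Icc 0 1 := mapsTo_mulOneSubRoot.iterate (n + 1) ht
    rw [Function.iterate_succ_apply'] at hhalf ⊢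
    have hx : 1 / 2 < x := hhalf.trans_le (mulOneSubRoot_le_self hx₀ hx₁)
    rw [mulOneSubRoot_pow hk hx₁, pow_succ]
    exact mul_le_mul (ih hx) (by linarith) (by linarith) (by positivity)

end mulOneSubRoot

/-- For `k ≥ 2` and `t ∈ [0,1]`, the `(k-1)`-fold iterate of `f_k(t) = t (1-t)^{1/k}`
is at most `1/2`. -/
theorem stmt18 (k : ℕ) (hk : 2 ≤ k) (t : ℝ) (ht : t ∈ Set.Icc (0 : ℝ) 1) :
    (fun t : ℝ => t * (1 - t) ^ ((1 : ℝ) / k))^[k - 1] t ≤ 1 / 2 := by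
  obtain ⟨n, rfl⟩ : ∃ n, k = n + 2 := ⟨k - 2, by omega⟩
  change (mulOneSubRoot (n + 2))^[n + 1] t ≤ 1 / 2
  by_contra! hhalf
  have hpow := iterate_mulOneSubRoot_pow_le (by omega) ht n hhalf
  have hx₀ := ((mapsTo_mulOneSubRoot (k := n + 2)).iterate (n + 1) ht).1
  exact hhalf.not_ge ((pow_le_pow_iff_left₀ hx₀ (by norm_num) (by omega)).mp hpow)
end
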